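/- Let A be a genotype matrix and B a haplotype matrix explaining A that satisfies the three gamete property. If i, j are columns with 11 ∈ ind^A(i,j), then for every row g of A with g[i] = g[j] = 2 the two rows h, h' of B explaining g satisfy h[i] = h[j] (g is resolved equally in i and j). -/

import Mathlib

/-- A pair of haplotypes `h`, `h'` explains a genotype `g`:
entries `0`/`1` are copied, and at `2`-entries the haplotypes differ. -/
def ExplainsRow {m : ℕ} (h h' : Fin m → Bool) (g : Fin m → Fin 3) : Prop :=
  ∀ j : Fin m,
    (g j = 0 → h j = false ∧ h' j = false) ∧
    (g j = 1 → h j = true ∧ h' j = true) ∧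
    (g j = 2 → h j ≠ h' j)

/-- A `2n × m` haplotype matrix, given by its odd rows `B₁` and even rows `B₂`,
explains an `n × m` genotype matrix `A`. -/
def Explains {n m : ℕ} (B₁ B₂ : Fin n → Fin m → Bool) (A : Fin n → Fin m → Fin 3) : Prop :=
  ∀ r : Fin n, ExplainsRow (B₁ r) (B₂ r) (A r)

/-- The induced set `ind^B(i,j)` of a haplotype matrix: all pairs `xy` appearing
in columns `i` and `j` in some row of `B`. -/
def indB {n m : ℕ} (B₁ B₂ : Fin n → Fin m → Bool) (i j : Fin m) : Set (Bool × Bool) :=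
  {p | ∃ r : Fin n, (B₁ r i = p.1 ∧ B₁ r j = p.2) ∨ (B₂ r i = p.1 ∧ B₂ r j = p.2)}

/-- The three gamete property: `{01,10,11}` is never a subset of an induced set. -/
def ThreeGamete {n m : ℕ} (B₁ B₂ : Fin n → Fin m → Bool) : Prop :=
  ∀ i j : Fin m,
    ¬ (({(false, true), (true, false), (true, true)} : Set (Bool × Bool)) ⊆ indB B₁ B₂ i j)

/-- The four gamete property: no induced set equals `{00,01,10,11}`. -/
def FourGamete {n m : ℕ} (B₁ B₂ : Fin n → Fin m → Bool) : Prop :=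
  ∀ i j : Fin m,
    indB B₁ B₂ i j ≠
      ({(false, false), (false, true), (true, false), (true, true)} : Set (Bool × Bool))

/-- A genotype matrix admits a directed perfect phylogeny if some explaining
haplotype matrix satisfies the three gamete property. -/
def AdmitsDirectedPP {n m : ℕ} (A : Fin n → Fin m → Fin 3) : Prop :=
  ∃ B₁ B₂ : Fin n → Fin m → Bool, Explains B₁ B₂ A ∧ ThreeGamete B₁ B₂

/-- A genotype matrix admits a perfect phylogeny if some explaining
haplotype matrix satisfies the four gamete property. -/
def AdmitsPP {n m : ℕ} (A : Fin n → Fin m → Fin 3) : Prop :=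
  ∃ B₁ B₂ : Fin n → Fin m → Bool, Explains B₁ B₂ A ∧ FourGamete B₁ B₂

/-- Encode a haplotype entry as a genotype entry. -/
def boolToFin3 (b : Bool) : Fin 3 := if b then 1 else 0

/-- The induced set `ind^A(i,j)` of a genotype matrix. -/
def indA {n m : ℕ} (A : Fin n → Fin m → Fin 3) (i j : Fin m) : Set (Bool × Bool) :=
  {p | ∃ r : Fin n,
    (A r i = boolToFin3 p.1 ∧ A r j = boolToFin3 p.2) ∨
    (A r i = boolToFin3 p.1 ∧ A r j = 2) ∨
    (A r i = 2 ∧ A r j = boolToFin3 p.2)}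

/-! Every pair induced by `A` is carried by one of the two haplotypes of its row, so
`ind^A(i,j) ⊆ ind^B(i,j)` and `11 ∈ ind^B(i,j)`. A row with `2` in both columns that were
resolved unequally would contribute the complementary pairs `01` and `10`, completing the
triple forbidden by the three gamete property. -/

namespace ExplainsRow

variable {m : ℕ} {h h' : Fin m → Bool} {g : Fin m → Fin 3} {j : Fin m}

theorem eq_of_eq_boolToFin3 (hg : ExplainsRow h h' g) {b : Bool} (hj : g j = boolToFin3 b) :
    h j = b ∧ h' j = b := by
  cases b
  · exact (hg j).1 hj
  · exact (hg j).2.1 hj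

theorem eq_not_of_eq_two (hg : ExplainsRow h h' g) (hj : g j = 2) : h' j = !h j :=
  Bool.eq_not_iff.mpr ((hg j).2.2 hj).symm

theorem exists_eq_of_eq_two (hg : ExplainsRow h h' g) (hj : g j = 2) (b : Bool) :
    h j = b ∨ h' j = b := by
  rw [hg.eq_not_of_eq_two hj]
  cases b <;> cases h j <;> simp

end ExplainsRow

section InducedSets

variable {n m : ℕ} {B₁ B₂ : Fin n → Fin m → Bool}

theorem mk_mem_indB_left (r : Fin n) (i j : Fin m) : (B₁ r i, B₁ r j) ∈ indB B₁ B₂ i j :=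
  ⟨r, Or.inl ⟨rfl, rfl⟩⟩

theorem mk_mem_indB_right (r : Fin n) (i j : Fin m) : (B₂ r i, B₂ r j) ∈ indB B₁ B₂ i j :=
  ⟨r, Or.inr ⟨rfl, rfl⟩⟩

theorem indA_subset_indB {A : Fin n → Fin m → Fin 3} (hexp : Explains B₁ B₂ A) (i j : Fin m) :
    indA A i j ⊆ indB B₁ B₂ i j := by
  rintro ⟨x, y⟩ ⟨r, ⟨hx, hy⟩ | ⟨hx, hy⟩ | ⟨hx, hy⟩⟩
  · exact ⟨r, Or.inl ⟨((hexp r).eq_of_eq_boolToFin3 hx).1, ((hexp r).eq_of_eq_boolToFin3 hy).1⟩⟩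
  · have ⟨hx₁, hx₂⟩ := (hexp r).eq_of_eq_boolToFin3 hx
    rcases (hexp r).exists_eq_of_eq_two hy y with hy₁ | hy₂
    · exact ⟨r, Or.inl ⟨hx₁, hy₁⟩⟩
    · exact ⟨r, Or.inr ⟨hx₂, hy₂⟩⟩
  · have ⟨hy₁, hy₂⟩ := (hexp r).eq_of_eq_boolToFin3 hy
    rcases (hexp r).exists_eq_of_eq_two hx x with hx₁ | hx₂
    · exact ⟨r, Or.inl ⟨hx₁, hy₁⟩⟩
    · exact ⟨r, Or.inr ⟨hx₂, hy₂⟩⟩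

theorem ThreeGamete.not_mem_indB_of_mem_indB (h3 : ThreeGamete B₁ B₂) {i j : Fin m}
    (h11 : (true, true) ∈ indB B₁ B₂ i j) (a : Bool) (ha : (a, !a) ∈ indB B₁ B₂ i j) :
    (!a, a) ∉ indB B₁ B₂ i j := by
  intro ha'
  apply h3 i j
  rintro p (rfl | rfl | rfl)
  · cases a
    exacts [ha, ha']
  · cases a
    exacts [ha', ha]
  · exact h11

end InducedSets

/-- Let `B` be a haplotype matrix explaining `A` that satisfies the three gamete
property. If `i, j` are columns with `11 ∈ ind^A(i,j)`, then every row `g` of `A`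
with `g[i] = g[j] = 2` is resolved equally in `i` and `j` by its explaining
haplotypes. -/
theorem equal_resolution_of_11 {n m : ℕ} (A : Fin n → Fin m → Fin 3)
    (B₁ B₂ : Fin n → Fin m → Bool) (hexp : Explains B₁ B₂ A) (h3 : ThreeGamete B₁ B₂)
    (i j : Fin m) (hind : ((true, true) : Bool × Bool) ∈ indA A i j)
    (r : Fin n) (hi : A r i = 2) (hj : A r j = 2) :
    B₁ r i = B₁ r j := by
  by_contra hne
  have hj₁ : B₁ r j = !B₁ r i := Bool.eq_not_iff.mpr (Ne.symm hne)
  have hi₂ : B₂ r i = !B₁ r i := (hexp r).eq_not_of_eq_two hi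
  have hj₂ : B₂ r j = B₁ r i := by rw [(hexp r).eq_not_of_eq_two hj, hj₁, Bool.not_not]
  have hleft : (B₁ r i, !B₁ r i) ∈ indB B₁ B₂ i j := hj₁ ▸ mk_mem_indB_left r i j
  have hright : (!B₁ r i, B₁ r i) ∈ indB B₁ B₂ i j := hi₂ ▸ hj₂ ▸ mk_mem_indB_right r i j
  exact h3.not_mem_indB_of_mem_indB (indA_subset_indB hexp i j hind) _ hleft hright
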